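/- Let L be a pure one-dimensional sheaf on a surface J which is an extension 0 → O_S → L → O_Z → 0 of the structure sheaf of a finite set Z of smooth points of a curve S by O_S, given by an extension class in Ext^1(O_Z, O_S) = ⊕_{z∈Z} T_zS that is nonzero in each factor. Then L is locally free of rank one on its support S. -/

import Mathlib

/-!
Pick `x ∈ L` lifting `1 ∈ k` and a uniformizer `π`. Then `π • x` lies in the kernel of `L → k`,
so `π • x = f a` for some `a ∈ R`. If `a` were not a unit, then `a = π b` and `x - f b` would be
killed by the maximal ideal and still map to `1`, so `r̄ ↦ r • (x - f b)` would split the sequence.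
Hence `a` is a unit, and then `x` is a free generator of `L`.
-/

open IsLocalRing

namespace IsLocalRing

variable {R M : Type*} [CommRing R] [IsLocalRing R] [AddCommGroup M] [Module R M]
  {f : R →ₗ[R] M} {g : M →ₗ[R] ResidueField R} {x : M}

lemma apply_smul_of_apply_eq_one (hx : g x = 1) (r : R) : g (r • x) = residue R r := by
  rw [map_smul, hx, Algebra.smul_def, mul_one, ResidueField.algebraMap_eq]

lemma exists_section_of_maximalIdeal_smul_eq_zero {t : M}
    (ht : ∀ r ∈ maximalIdeal R, r • t = 0) (hgt : g t = 1) :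
    ∃ s : ResidueField R →ₗ[R] M, g ∘ₗ s = LinearMap.id := by
  refine ⟨(maximalIdeal R).liftQ (LinearMap.toSpanSingleton R M t) ht, ?_⟩
  ext y
  obtain ⟨r, rfl⟩ := residue_surjective y
  exact apply_smul_of_apply_eq_one hgt r

variable {π : R}

lemma exists_section_of_smul_eq_apply_mem_maximalIdeal
    (hπ : maximalIdeal R = Ideal.span {π}) (hexact : Function.Exact f g)
    (hx : g x = 1) {a : R} (ha : f a = π • x) (ham : a ∈ maximalIdeal R) :
    ∃ s : ResidueField R →ₗ[R] M, g ∘ₗ s = LinearMap.id := by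
  rw [hπ, Ideal.mem_span_singleton'] at ham
  obtain ⟨b, rfl⟩ := ham
  have hπt : π • (x - f b) = 0 := by
    rw [smul_sub, ← ha, ← map_smul, smul_eq_mul, mul_comm, sub_self]
  refine exists_section_of_maximalIdeal_smul_eq_zero (t := x - f b) (fun r hr => ?_) ?_
  · rw [hπ, Ideal.mem_span_singleton'] at hr
    obtain ⟨c, rfl⟩ := hr
    rw [mul_smul, hπt, smul_zero]
  · rw [map_sub, hx, hexact.apply_apply_eq_zero, sub_zero]

lemma injective_toSpanSingleton_of_smul_eq_apply_unit
    (hπ : maximalIdeal R = Ideal.span {π}) (hf : Function.Injective f)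
    (hx : g x = 1) {u : Rˣ} (hu : f u = π • x) :
    Function.Injective (LinearMap.toSpanSingleton R M x) := by
  rw [injective_iff_map_eq_zero]
  intro r hr
  rw [LinearMap.toSpanSingleton_apply] at hr
  have hrm : r ∈ maximalIdeal R := by
    rw [← residue_eq_zero_iff, ← apply_smul_of_apply_eq_one hx, hr, map_zero]
  rw [hπ, Ideal.mem_span_singleton'] at hrm
  obtain ⟨c, rfl⟩ := hrm
  have hcu : f (c * u) = 0 := by
    rw [← smul_eq_mul, map_smul, hu, ← mul_smul, hr]
  rw [(Units.mul_left_eq_zero u).mp (hf (hcu.trans f.map_zero.symm)), zero_mul]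

lemma surjective_toSpanSingleton_of_smul_eq_apply_unit (hexact : Function.Exact f g)
    (hx : g x = 1) {u : Rˣ} (hu : f u = π • x) :
    Function.Surjective (LinearMap.toSpanSingleton R M x) := by
  intro l
  obtain ⟨c, hc⟩ := residue_surjective (g l)
  obtain ⟨d, hd⟩ : ∃ d, f d = l - c • x := (hexact _).mp <| by
    rw [map_sub, apply_smul_of_apply_eq_one hx, hc, sub_self]
  have hfd : f d = (d * ↑u⁻¹ * π) • x := by
    rw [mul_smul, ← hu, ← map_smul, smul_eq_mul, mul_assoc, Units.inv_mul, mul_one]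
  refine ⟨c + d * ↑u⁻¹ * π, ?_⟩
  rw [LinearMap.toSpanSingleton_apply, add_smul, ← hfd, hd, add_sub_cancel]

end IsLocalRing

/-- let `L` be a pure one-dimensional sheaf on a smooth surface
`J` given as an extension `0 → O_S → L → O_Z → 0` of the structure sheaf of a
finite set `Z` of smooth points of a reduced curve `S` by `O_S`, with extension
class `(ξ_z)_{z∈Z} ∈ Ext¹(O_Z,O_S) = ⊕_{z∈Z} T_zS` nonzero in each factor.
Then `L` is locally free of rank one on its support `S`.

Away from `Z` the extension is an isomorphism `O_S ≅ L`, so the content is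
local at each `z ∈ Z`: the stalk `O_{S,z}` is a discrete valuation ring `R z`
(a smooth point of a curve), the stalk of the extension is an exact sequence
`0 → R z → L_z → k(z) → 0` of `R z`-modules, and nonvanishing of the extension
class at `z` means this sequence does not split.  The conclusion is that each
stalk `L_z` is a free `R z`-module of rank one. -/
theorem stalk_free_of_nonsplit_extension
    {Z : Type*}
    (R : Z → Type*) [∀ z, CommRing (R z)] [∀ z, IsDomain (R z)]
    [∀ z, IsDiscreteValuationRing (R z)]                -- O_{S,z}, z smooth on S
    (L : Z → Type*) [∀ z, AddCommGroup (L z)] [∀ z, Module (R z) (L z)]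
    (f : ∀ z, R z →ₗ[R z] L z)                          -- O_S → L at z
    (g : ∀ z, L z →ₗ[R z] IsLocalRing.ResidueField (R z)) -- L → O_Z at z
    (hf : ∀ z, Function.Injective (f z))
    (hg : ∀ z, Function.Surjective (g z))
    (hexact : ∀ z, Function.Exact (f z) (g z))
    -- the extension class is nonzero in each factor T_zS:
    (hnonsplit : ∀ z, ¬ ∃ s : IsLocalRing.ResidueField (R z) →ₗ[R z] L z,
      (g z) ∘ₗ s = LinearMap.id) :
    ∀ z, Nonempty (L z ≃ₗ[R z] R z) := by
  intro z
  obtain ⟨π, hπ⟩ := IsDiscreteValuationRing.exists_irreducible (R z)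
  have hspan := (IsDiscreteValuationRing.irreducible_iff_uniformizer π).mp hπ
  obtain ⟨x, hx⟩ := hg z 1
  obtain ⟨a, ha⟩ : ∃ a, f z a = π • x := (hexact z _).mp <| by
    rw [apply_smul_of_apply_eq_one hx, residue_eq_zero_iff, hspan]
    exact Ideal.mem_span_singleton_self π
  by_cases hunit : IsUnit a
  · obtain ⟨u, rfl⟩ := hunit
    have hbij : Function.Bijective (LinearMap.toSpanSingleton (R z) (L z) x) :=
      ⟨injective_toSpanSingleton_of_smul_eq_apply_unit hspan (hf z) hx ha,
        surjective_toSpanSingleton_of_smul_eq_apply_unit (hexact z) hx ha⟩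
    exact ⟨(LinearEquiv.ofBijective _ hbij).symm⟩
  · exact (hnonsplit z (exists_section_of_smul_eq_apply_mem_maximalIdeal hspan (hexact z) hx ha
      ((mem_maximalIdeal a).mpr hunit))).elim
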